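/- arXiv:1210.2673 — 3 statements merged into one kernel-verified Lean document; each statement's English description precedes it below -/
import Mathlib

section
/- Let (X, μ) be a finite measure space and f : X → X a measure-preserving map. Then for every measurable set S ⊆ X, μ-almost every point x of S returns to S infinitely often under iteration of f; that is, the set of points x ∈ S for which f^n(x) ∈ S for only finitely many n ∈ ℕ has measure zero. -/
open MeasureTheory

/-- **Poincaré recurrence theorem.** For a measure-preserving map `f` on a finite
measure space, almost every point of a measurable set `S` returns to `S`
infinitely often: the set of points of `S` that visit `S` only finitely many
times under iteration of `f` has measure zero. -/
theorem poincare_recurrence {X : Type*} [MeasurableSpace X] (μ : Measure X)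
    [IsFiniteMeasure μ] (f : X → X) (hf : MeasurePreserving f μ μ)
    (S : Set X) (hS : MeasurableSet S) :
    μ {x | x ∈ S ∧ {n : ℕ | f^[n] x ∈ S}.Finite} = 0 := by
  have h := hf.conservative.ae_mem_imp_frequently_image_mem hS.nullMeasurableSet
  rw [MeasureTheory.ae_iff] at h
  refine measure_mono_null (fun x hx => ?_) h
  obtain ⟨hxS, hfin⟩ := hx
  intro hmem
  exact (Nat.frequently_atTop_iff_infinite.mp (hmem hxS)) hfin
end

section
/- Let n ∈ ℕ and A ∈ M_n(ℂ). If every eigenvalue of A has strictly negative real part, then for every x₀ ∈ ℂⁿ the solution t ↦ exp(tA)·x₀ of the linear system x′ = A·x tends to 0 as t → +∞. -/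
/-!
Decompose `x₀` along the generalized eigenspaces of `A`. On the one for `μ`, `B = A - μ` is
nilpotent, so `exp (t A) x = e^{tμ} ∑_{i<k} tⁱ/i! Bⁱ x` is a finite combination of fixed vectors
with coefficients `tⁱ e^{tμ}`, each of which tends to `0` because `Re μ < 0`.
-/

open NormedSpace Filter Topology Finset Nat Matrix

theorem Complex.tendsto_pow_mul_exp_mul_atTop_nhds_zero {μ : ℂ} (hμ : μ.re < 0) (k : ℕ) :
    Tendsto (fun t : ℝ => (t : ℂ) ^ k * Complex.exp (t * μ)) atTop (𝓝 0) := by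
  rw [tendsto_zero_iff_norm_tendsto_zero]
  refine (tendsto_rpow_mul_exp_neg_mul_atTop_nhds_zero k (-μ.re) (neg_pos.2 hμ)).congr' ?_
  filter_upwards [eventually_ge_atTop 0] with t ht
  rw [norm_mul, norm_pow, Complex.norm_real, Real.norm_of_nonneg ht, Complex.norm_exp,
    Real.rpow_natCast, Complex.re_ofReal_mul, neg_neg, mul_comm μ.re]

theorem NormedSpace.exp_algebraMap_add {𝕂 𝔸 : Type*} [RCLike 𝕂] [NormedRing 𝔸]
    [NormedAlgebra 𝕂 𝔸] [CompleteSpace 𝔸] (c : 𝕂) (x : 𝔸) :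
    exp (algebraMap 𝕂 𝔸 c + x) = exp c • exp x := by
  have hball (y : 𝔸) : y ∈ Metric.eball 0 (expSeries 𝕂 𝔸).radius :=
    (expSeries_radius_eq_top 𝕂 𝔸).symm ▸ edist_lt_top _ _
  rw [exp_add_of_commute_of_mem_ball (Algebra.commutes c x) (hball _) (hball _),
    ← algebraMap_exp_comm, Algebra.smul_def]

theorem Module.End.hasEigenvalue_of_mem_maxGenEigenspace {R M : Type*} [CommRing R]
    [AddCommGroup M] [Module R M] {f : Module.End R M} {μ : R} {x : M}
    (hx : x ∈ f.maxGenEigenspace μ) (hx0 : x ≠ 0) : f.HasEigenvalue μ :=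
  (hasUnifEigenvalue_iff_hasUnifEigenvalue_one (by simp)).1 <|
    (Submodule.ne_bot_iff _).2 ⟨x, hx, hx0⟩

theorem Matrix.mem_maxGenEigenspace_toLin' {ι R : Type*} [Fintype ι] [DecidableEq ι] [CommRing R]
    {A : Matrix ι ι R} {μ : R} {x : ι → R} :
    x ∈ Module.End.maxGenEigenspace (toLin' A) μ ↔ ∃ k : ℕ, ((A - μ • 1) ^ k) *ᵥ x = 0 := by
  have h (k : ℕ) : toLin' ((A - μ • 1) ^ k) = (toLin' A - μ • 1) ^ k := by
    rw [toLin'_pow, map_sub, map_smul, toLin'_one, Module.End.one_eq_id]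
  simp_rw [Module.End.mem_maxGenEigenspace, ← h, toLin'_apply]

section
-- `exp` only depends on the topology; the operator norm supplies the instances its lemmas need.
open scoped Matrix.Norms.Operator

variable {ι 𝕂 : Type*} [Fintype ι] [DecidableEq ι] [RCLike 𝕂]

theorem Matrix.exp_mulVec_eq_sum_of_pow_mulVec_eq_zero {B : Matrix ι ι 𝕂} {x : ι → 𝕂} {k : ℕ}
    (hx : (B ^ k) *ᵥ x = 0) : exp B *ᵥ x = ∑ i ∈ range k, (i !⁻¹ : 𝕂) • (B ^ i *ᵥ x) := by
  have hsum : HasSum (fun i => (i !⁻¹ : 𝕂) • (B ^ i *ᵥ x)) (exp B *ᵥ x) := by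
    convert (exp_series_hasSum_exp' (𝕂 := 𝕂) B).map (mulVec.addMonoidHomLeft x)
      (continuous_id.matrix_mulVec continuous_const) using 1
    · ext i : 1
      exact (smul_mulVec _ _ _).symm
    · rfl
  rw [← hsum.tsum_eq, tsum_eq_sum (s := range k)]
  intro i hi
  obtain ⟨j, rfl⟩ := Nat.exists_eq_add_of_le (not_lt.1 (mem_range.not.1 hi))
  rw [add_comm, pow_add, ← mulVec_mulVec, hx, mulVec_zero, smul_zero]

theorem Matrix.tendsto_exp_smul_mulVec_of_pow_sub_smul_one_mulVec_eq_zero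
    {A : Matrix ι ι ℂ} {μ : ℂ} (hμ : μ.re < 0) {k : ℕ} {x : ι → ℂ}
    (hx : ((A - μ • 1) ^ k) *ᵥ x = 0) :
    Tendsto (fun t : ℝ => exp (t • A) *ᵥ x) atTop (𝓝 0) := by
  set B := A - μ • 1
  have hexp (t : ℝ) : exp (t • A) *ᵥ x =
      ∑ i ∈ range k, ((t : ℂ) ^ i * Complex.exp (t * μ) * (i ! : ℂ)⁻¹) • (B ^ i *ᵥ x) := by
    have hsplit : exp (t • A) = Complex.exp (t * μ) • exp ((t : ℂ) • B) := by
      rw [← Complex.coe_smul, ← add_sub_cancel (μ • 1) A, smul_add, ← mul_smul,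
        ← Algebra.algebraMap_eq_smul_one, Complex.exp_eq_exp_ℂ]
      exact exp_algebraMap_add _ _
    have hx' : ((t : ℂ) • B) ^ k *ᵥ x = 0 := by rw [smul_pow, smul_mulVec, hx, smul_zero]
    rw [hsplit, smul_mulVec, exp_mulVec_eq_sum_of_pow_mulVec_eq_zero hx', Finset.smul_sum]
    refine sum_congr rfl fun i _ => ?_
    rw [smul_pow, smul_mulVec, smul_smul, smul_smul]
    ring_nf
  refine (tendsto_congr hexp).2 ?_
  rw [← sum_const_zero]
  refine tendsto_finsetSum _ fun i _ => ?_
  simpa using ((Complex.tendsto_pow_mul_exp_mul_atTop_nhds_zero hμ i).mul_const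
    (i ! : ℂ)⁻¹).smul_const (B ^ i *ᵥ x)

end

/-- If every eigenvalue of `A` has strictly negative real part, then every
solution `t ↦ exp(tA)·x₀` of `x' = A·x` tends to `0` as `t → +∞`. -/
theorem solution_tendsto_zero_of_eigenvalues_re_neg (n : ℕ)
    (A : Matrix (Fin n) (Fin n) ℂ)
    (hA : ∀ α ∈ spectrum ℂ A, α.re < 0) :
    ∀ x₀ : Fin n → ℂ,
      Tendsto (fun t : ℝ => (exp (t • A)).mulVec x₀) atTop (nhds 0) := by
  intro x₀
  have hx₀ : x₀ ∈ ⨆ μ, Module.End.maxGenEigenspace (toLin' A) μ := by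
    rw [Module.End.iSup_maxGenEigenspace_eq_top]
    exact Submodule.mem_top
  induction hx₀ using Submodule.iSup_induction' with
  | mem μ x hx =>
    rcases eq_or_ne x 0 with rfl | hx0
    · simp
    have hμ : μ ∈ spectrum ℂ A :=
      spectrum_toLin' A ▸ (Module.End.hasEigenvalue_of_mem_maxGenEigenspace hx hx0).mem_spectrum
    obtain ⟨k, hk⟩ := mem_maxGenEigenspace_toLin'.1 hx
    exact tendsto_exp_smul_mulVec_of_pow_sub_smul_one_mulVec_eq_zero (hA μ hμ) hk
  | zero => simp
  | add x y _ _ hx hy => simpa [mulVec_add] using hx.add hy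
end

section
/- Let n ∈ ℕ and A ∈ M_n(ℂ). If every eigenvalue of A has real part ≤ 0, and every eigenvalue with real part equal to 0 is a simple root of the characteristic polynomial of A, then the family {exp(tA) : t ≥ 0} is bounded in norm, so every solution t ↦ exp(tA)·x₀ of x′ = A·x remains bounded for t ≥ 0. -/
open NormedSpace

attribute [local instance] Matrix.linftyOpNormedAddCommGroup
  Matrix.linftyOpNormedRing Matrix.linftyOpNormedAlgebra

/-!
The generalized eigenspaces of `A` span `ℂⁿ`. On the one for `α`, `exp (t • A)` acts as `e^{tα}`
times a polynomial in `t`, which stays bounded for `t ≥ 0` when `Re α < 0`. When `α` is a simple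
root of the characteristic polynomial, its generalized eigenspace is the eigenspace, on which
`exp (t • A)` acts as `e^{tα}`, of modulus `1` when `Re α = 0`. So every trajectory
`t ↦ exp (t • A) *ᵥ y` is bounded, and by Banach–Steinhaus so is `‖exp (t • A)‖`.
-/

open Finset Matrix Module.End
open scoped Nat

namespace Module.End

theorem maxGenEigenspace_eq_bot_of_notMem_spectrum {R M : Type*} [CommRing R] [AddCommGroup M]
    [Module R M] (f : End R M) {μ : R} (h : μ ∉ spectrum R f) : f.maxGenEigenspace μ = ⊥ := by
  by_contra hne
  exact h (HasUnifEigenvalue.lt one_pos hne).mem_spectrum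

variable {K V : Type*} [Field K] [AddCommGroup V] [Module K V] [FiniteDimensional K V]

theorem maxGenEigenspace_eq_eigenspace_of_rootMultiplicity_le_one (f : End K V) {μ : K}
    (h : f.charpoly.rootMultiplicity μ ≤ 1) : f.maxGenEigenspace μ = f.eigenspace μ := by
  rcases eq_or_ne (f.maxGenEigenspace μ) ⊥ with hbot | hne
  · exact le_antisymm (hbot ▸ bot_le) eigenspace_le_maxGenEigenspace
  · have heig : f.eigenspace μ ≠ ⊥ := HasUnifEigenvalue.lt one_pos hne
    refine (Submodule.eq_of_le_of_finrank_le eigenspace_le_maxGenEigenspace ?_).symm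
    rw [LinearMap.finrank_maxGenEigenspace_eq]
    exact h.trans (Submodule.one_le_finrank_iff.mpr heig)

end Module.End

namespace Real

theorem pow_div_factorial_mul_exp_neg_le {β t : ℝ} (hβ : 0 < β) (ht : 0 ≤ t) (j : ℕ) :
    t ^ j / j ! * Real.exp (-(β * t)) ≤ (β ^ j)⁻¹ := by
  have h := Real.pow_div_factorial_le_exp (β * t) (by positivity) j
  rw [mul_pow, mul_div_assoc] at h
  rw [Real.exp_neg, ← div_eq_mul_inv, div_le_iff₀ (Real.exp_pos _), inv_mul_eq_div,
    le_div_iff₀' (pow_pos hβ j)]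
  exact h

end Real

namespace Matrix

variable {m : Type*} [Fintype m] [DecidableEq m]

theorem mem_maxGenEigenspace_toLin'_iff {K : Type*} [Field K] {A : Matrix m m K} {μ : K}
    {y : m → K} : y ∈ maxGenEigenspace (toLin' A) μ ↔ ∃ k : ℕ, (A - μ • 1) ^ k *ᵥ y = 0 := by
  rw [mem_maxGenEigenspace]
  have h (k : ℕ) : (toLin' A - μ • 1) ^ k = toLinAlgEquiv' ((A - μ • 1) ^ k) := by
    rw [map_pow, map_sub, map_smul, map_one]; rfl
  simp only [h, toLinAlgEquiv'_apply]

theorem exp_eq_exp_smul_exp_sub_smul_one (c : ℂ) (A : Matrix m m ℂ) :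
    exp A = Complex.exp c • exp (A - c • 1) := by
  have hcomm : Commute (c • 1) (A - c • 1) := (Commute.one_left _).smul_left c
  have hc : exp (c • 1 : Matrix m m ℂ) = Complex.exp c • 1 := by
    rw [← Algebra.algebraMap_eq_smul_one, ← Algebra.algebraMap_eq_smul_one, Complex.exp_eq_exp_ℂ]
    exact (algebraMap_exp_comm c).symm
  conv_lhs => rw [← add_sub_cancel (c • 1 : Matrix m m ℂ) A]
  rw [exp_add_of_commute _ _ hcomm, hc, smul_one_mul]

theorem exp_mulVec_eq_sum_of_pow_mulVec_eq_zero_s9 {𝕂 : Type*} [RCLike 𝕂] {N : Matrix m m 𝕂}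
    {y : m → 𝕂} {k : ℕ} (h : N ^ k *ᵥ y = 0) :
    exp N *ᵥ y = ∑ j ∈ range k, (j ! : 𝕂)⁻¹ • (N ^ j *ᵥ y) := by
  have hcont : Continuous (mulVec.addMonoidHomLeft y : Matrix m m 𝕂 →+ m → 𝕂) :=
    continuous_id.matrix_mulVec continuous_const
  calc exp N *ᵥ y = mulVec.addMonoidHomLeft y (∑' j : ℕ, (j ! : 𝕂)⁻¹ • N ^ j) := by
        rw [exp_eq_tsum 𝕂]; rfl
    _ = ∑' j : ℕ, (j ! : 𝕂)⁻¹ • (N ^ j *ᵥ y) :=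
        ((expSeries_summable' (𝕂 := 𝕂) N).map_tsum _ hcont).trans <| by
          simp [mulVec.addMonoidHomLeft, smul_mulVec]
    _ = _ := tsum_eq_sum fun j hj => by
        rw [← Nat.sub_add_cancel (not_lt.mp (mem_range.not.mp hj)), pow_add, ← mulVec_mulVec, h,
          mulVec_zero, smul_zero]

theorem exp_smul_mulVec_eq_of_pow_mulVec_eq_zero {A : Matrix m m ℂ} {α : ℂ} {y : m → ℂ} {k : ℕ}
    (h : (A - α • 1) ^ k *ᵥ y = 0) (z : ℂ) :
    exp (z • A) *ᵥ y =
      Complex.exp (z * α) • ∑ j ∈ range k, (j ! : ℂ)⁻¹ • ((z • (A - α • 1)) ^ j *ᵥ y) := by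
  have hz : z • A - (z * α) • 1 = z • (A - α • 1) := by rw [smul_sub, smul_smul]
  rw [exp_eq_exp_smul_exp_sub_smul_one (z * α), smul_mulVec, hz,
    exp_mulVec_eq_sum_of_pow_mulVec_eq_zero_s9 (by rw [smul_pow, smul_mulVec, h, smul_zero])]

theorem norm_exp_smul_mulVec_le_of_pow_mulVec_eq_zero {A : Matrix m m ℂ} {α : ℂ} {y : m → ℂ}
    {k : ℕ} (h : (A - α • 1) ^ k *ᵥ y = 0) {t : ℝ} (ht : 0 ≤ t) :
    ‖exp (t • A) *ᵥ y‖ ≤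
      Real.exp (t * α.re) * ∑ j ∈ range k, t ^ j / j ! * ‖(A - α • 1) ^ j *ᵥ y‖ := by
  rw [← Complex.coe_smul, exp_smul_mulVec_eq_of_pow_mulVec_eq_zero h, norm_smul,
    Complex.norm_exp, Complex.re_ofReal_mul]
  gcongr
  refine (norm_sum_le _ _).trans (sum_le_sum fun j _ => ?_)
  rw [smul_pow, smul_mulVec, smul_smul, norm_smul, norm_mul, norm_inv, norm_pow,
    Complex.norm_real, Complex.norm_natCast, Real.norm_of_nonneg ht]
  exact le_of_eq (by ring)

def boundedTrajectories (A : Matrix m m ℂ) : Submodule ℂ (m → ℂ) where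
  carrier := {y | ∃ C, ∀ t : ℝ, 0 ≤ t → ‖exp (t • A) *ᵥ y‖ ≤ C}
  add_mem' := by
    rintro x y ⟨C, hC⟩ ⟨D, hD⟩
    refine ⟨C + D, fun t ht => ?_⟩
    rw [mulVec_add]
    exact (norm_add_le _ _).trans (add_le_add (hC t ht) (hD t ht))
  zero_mem' := ⟨0, fun t _ => by simp⟩
  smul_mem' := by
    rintro c y ⟨C, hC⟩
    refine ⟨‖c‖ * C, fun t ht => ?_⟩
    rw [mulVec_smul, norm_smul]
    exact mul_le_mul_of_nonneg_left (hC t ht) (norm_nonneg c)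

theorem maxGenEigenspace_le_boundedTrajectories {A : Matrix m m ℂ} {α : ℂ} (hα : α.re < 0) :
    maxGenEigenspace (toLin' A) α ≤ boundedTrajectories A := by
  intro y hy
  obtain ⟨k, hk⟩ := mem_maxGenEigenspace_toLin'_iff.mp hy
  have hβ : 0 < -α.re := neg_pos.mpr hα
  refine ⟨∑ j ∈ range k, ((-α.re) ^ j)⁻¹ * ‖(A - α • 1) ^ j *ᵥ y‖, fun t ht => ?_⟩
  calc ‖exp (t • A) *ᵥ y‖
      ≤ Real.exp (t * α.re) * ∑ j ∈ range k, t ^ j / j ! * ‖(A - α • 1) ^ j *ᵥ y‖ :=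
        norm_exp_smul_mulVec_le_of_pow_mulVec_eq_zero hk ht
    _ = ∑ j ∈ range k, t ^ j / j ! * Real.exp (-(-α.re * t)) * ‖(A - α • 1) ^ j *ᵥ y‖ := by
        rw [mul_sum]; exact sum_congr rfl fun j _ => by ring_nf
    _ ≤ _ := sum_le_sum fun j _ => by
        gcongr
        exact Real.pow_div_factorial_mul_exp_neg_le hβ ht j

theorem eigenspace_le_boundedTrajectories {A : Matrix m m ℂ} {α : ℂ} (hα : α.re ≤ 0) :
    eigenspace (toLin' A) α ≤ boundedTrajectories A := by
  intro y hy
  have hy₁ : (A - α • 1) ^ 1 *ᵥ y = 0 := by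
    rw [pow_one, sub_mulVec, ← toLin'_apply, mem_eigenspace_iff.mp hy, smul_mulVec, one_mulVec,
      sub_self]
  refine ⟨‖y‖, fun t ht => ?_⟩
  calc ‖exp (t • A) *ᵥ y‖ ≤ Real.exp (t * α.re) * ‖y‖ := by
        simpa using norm_exp_smul_mulVec_le_of_pow_mulVec_eq_zero hy₁ ht
    _ ≤ ‖y‖ := mul_le_of_le_one_left (norm_nonneg y)
        (Real.exp_le_one_iff.mpr (mul_nonpos_of_nonneg_of_nonpos ht hα))

theorem boundedTrajectories_eq_top {A : Matrix m m ℂ} (h1 : ∀ α ∈ spectrum ℂ A, α.re ≤ 0)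
    (h2 : ∀ α ∈ spectrum ℂ A, α.re = 0 → A.charpoly.rootMultiplicity α = 1) :
    boundedTrajectories A = ⊤ := by
  rw [eq_top_iff, ← iSup_maxGenEigenspace_eq_top (toLin' A)]
  refine iSup_le fun α => ?_
  by_cases hα : α ∈ spectrum ℂ A
  · rcases (h1 α hα).lt_or_eq with hneg | hzero
    · exact maxGenEigenspace_le_boundedTrajectories hneg
    · rw [maxGenEigenspace_eq_eigenspace_of_rootMultiplicity_le_one _
        (by rw [charpoly_toLin']; exact (h2 α hα hzero).le)]
      exact eigenspace_le_boundedTrajectories hzero.le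
  · rw [maxGenEigenspace_eq_bot_of_notMem_spectrum _ (by rwa [spectrum_toLin'])]
    exact bot_le

theorem exists_norm_exp_smul_le_of_boundedTrajectories_eq_top {A : Matrix m m ℂ}
    (h : boundedTrajectories A = ⊤) : ∃ C, ∀ t : ℝ, 0 ≤ t → ‖exp (t • A)‖ ≤ C := by
  obtain ⟨C, hC⟩ := banach_steinhaus
    (g := fun t : Set.Ici (0 : ℝ) => ContinuousLinearMap.mk (exp ((t : ℝ) • A)).mulVecLin)
    fun y => by
      obtain ⟨C, hC⟩ : y ∈ boundedTrajectories A := h ▸ Submodule.mem_top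
      exact ⟨C, fun t => hC t t.2⟩
  exact ⟨C, fun t ht => (linfty_opNorm_eq_opNorm _).trans_le (hC ⟨t, ht⟩)⟩

end Matrix

/-- Poincaré's temporary stability criterion: if every eigenvalue of `A` has
nonpositive real part and every purely imaginary eigenvalue is a simple root of
the characteristic polynomial, then `{exp(tA) : t ≥ 0}` is bounded in norm, so
every solution `t ↦ exp(tA)·x₀` of `x' = A·x` stays bounded for `t ≥ 0`. -/
theorem exp_bounded_of_spectrum_nonpos_simple_imaginary (n : ℕ)
    (A : Matrix (Fin n) (Fin n) ℂ)
    (h1 : ∀ α ∈ spectrum ℂ A, α.re ≤ 0)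
    (h2 : ∀ α ∈ spectrum ℂ A, α.re = 0 →
      (Matrix.charpoly A).rootMultiplicity α = 1) :
    ∃ C : ℝ, (∀ t : ℝ, 0 ≤ t → ‖exp (t • A)‖ ≤ C) ∧
      ∀ (x₀ : Fin n → ℂ) (t : ℝ), 0 ≤ t →
        ‖(exp (t • A)).mulVec x₀‖ ≤ C * ‖x₀‖ := by
  obtain ⟨C, hC⟩ :=
    exists_norm_exp_smul_le_of_boundedTrajectories_eq_top (boundedTrajectories_eq_top h1 h2)
  exact ⟨C, hC, fun x₀ t ht =>
    (linfty_opNorm_mulVec _ x₀).trans (mul_le_mul_of_nonneg_right (hC t ht) (norm_nonneg x₀))⟩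
end
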